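/- arXiv:2001.10927 — 2 statements merged into one kernel-verified Lean document; each statement's English description precedes it below -/
import Mathlib

section
/- Let ν ∈ E_ε be written as a sequence of primary particles ((l₁,c₁),…,(l_s,c_s)), where I ⊆ {1,…,s} indexes the upper halves of the secondary particles of ν (so l_i = l_{i+1} + ε(c_i,c_{i+1}) for i ∈ I), I+1 indexes the lower halves, and J indexes the particles of ν that are primary, I, I+1, J forming a set-partition of {1,…,s}. Setting l'_k = l_k for k ∈ J and l'_k = 2 l_k for k ∈ I ∪ (I+1), the inequality l'_k − l'_{k'} ≥ η(k,k') + Δ(k,k') holds for all k ≤ k' in {1,…,s}, where η(k,k') = |(k,k'] ∩ J|. -/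
open Finset in
/-- The formal energy of transfer `Δ(k,k')` along the state sequence `c`:
`Δ(k,k') = Σ_{u=k}^{k'−1} ε(c_u,c_{u+1})` for `k ≤ k'` and `Δ(k,k') = −Δ(k',k)` else. -/
noncomputable def Del {C : Type*} (ε : C → C → ℤ) (c : ℤ → C) (k k' : ℤ) : ℤ :=
  (∑ u ∈ Finset.Ico k k', ε (c u) (c (u + 1))) -
    ∑ u ∈ Finset.Ico k' k, ε (c u) (c (u + 1))

/-- `β(k,k') = |[k,k') ∩ J|` for `k ≤ k'` and `β(k,k') = −β(k',k)` otherwise. -/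
noncomputable def Bet (J : Finset ℤ) (k k' : ℤ) : ℤ :=
  ((Finset.Ico k k' ∩ J).card : ℤ) - ((Finset.Ico k' k ∩ J).card : ℤ)

/-- Doubled potentials: `l'_k = l_k` for `k ∈ J` (primary particles) and `l'_k = 2 l_k`
for `k ∈ I ∪ (I+1)` (halves of secondary particles). -/
def lpot (l : ℤ → ℤ) (J : Finset ℤ) (k : ℤ) : ℤ := if k ∈ J then l k else 2 * l k

/-!
Both sides of the inequality are additive along `k < k+1 < ⋯ < k'`, so it suffices to prove it
for adjacent positions `u, u+1`, i.e. `[u+1 ∈ J] + ε(c_u,c_{u+1}) ≤ l'_u − l'_{u+1}`. This is a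
case analysis on the kinds of the two positions: inside a secondary particle it is the defining
relation of the upper half (with `ε ≥ 0`), and between two consecutive particles it is exactly
the relation `≫_ε` between them, rewritten through the doubled potentials.
-/

open Finset

section

variable {C : Type*} {ε : C → C → ℤ} {c : ℤ → C} {l : ℤ → ℤ} {I J : Finset ℤ}

@[simp]
lemma Del_self (k : ℤ) : Del ε c k k = 0 := by
  simp [Del]

lemma Del_add_one_right {k n : ℤ} (hkn : k ≤ n) :
    Del ε c k (n + 1) = Del ε c k n + ε (c n) (c (n + 1)) := by
  rw [Del, Del, ← insert_Ico_right_eq_Ico_add_one hkn, sum_insert right_notMem_Ico,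
    Ico_eq_empty_of_le (show k ≤ n + 1 by omega), Ico_eq_empty_of_le hkn]
  ring

lemma card_Ioc_add_one_inter {k n : ℤ} (hkn : k ≤ n) :
    ((Ioc k (n + 1) ∩ J).card : ℤ) = (Ioc k n ∩ J).card + if n + 1 ∈ J then 1 else 0 := by
  rw [← insert_Ioc_right_eq_Ioc_add_one hkn]
  by_cases hn : n + 1 ∈ J
  · rw [insert_inter_of_mem hn, card_insert_of_notMem (by simp), if_pos hn, Nat.cast_succ]
  · rw [insert_inter_of_notMem hn, if_neg hn, add_zero]

theorem card_Ioc_inter_add_Del_le_of_step {f : ℤ → ℤ} {k s : ℤ}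
    (hstep : ∀ u, k ≤ u → u + 1 ≤ s →
      (if u + 1 ∈ J then 1 else 0) + ε (c u) (c (u + 1)) ≤ f u - f (u + 1))
    {n : ℤ} (hkn : k ≤ n) (hns : n ≤ s) :
    ((Ioc k n ∩ J).card : ℤ) + Del ε c k n ≤ f k - f n := by
  induction n, hkn using Int.leInduction with
  | base => simp
  | succ n hkn ih =>
    rw [card_Ioc_add_one_inter hkn, Del_add_one_right hkn]
    linarith [ih (by omega), hstep n hkn hns]

lemma mem_or_sub_one_mem_or_mem_of_union_eq {s v : ℤ}
    (hu : I ∪ I.image (· + 1) ∪ J = Icc 1 s) (hv : 1 ≤ v) (hvs : v ≤ s) :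
    v ∈ I ∨ v - 1 ∈ I ∨ v ∈ J := by
  have hmem : v ∈ I ∪ I.image (· + 1) ∪ J := hu ▸ mem_Icc.mpr ⟨hv, hvs⟩
  simp only [mem_union, mem_image] at hmem
  rcases hmem with (hI | ⟨i, hi, rfl⟩) | hJ
  · exact .inl hI
  · exact .inr (.inl (by simpa using hi))
  · exact .inr (.inr hJ)

lemma lpot_step_of_mem_upper (hε : ∀ a b, 0 ≤ ε a b) (hd2 : Disjoint I J)
    (hd3 : Disjoint (I.image (· + 1)) J) (hupper : ∀ i ∈ I, l i = l (i + 1) + ε (c i) (c (i + 1)))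
    {i : ℤ} (hi : i ∈ I) :
    (if i + 1 ∈ J then 1 else 0) + ε (c i) (c (i + 1)) ≤ lpot l J i - lpot l J (i + 1) := by
  have hiJ : i ∉ J := disjoint_left.mp hd2 hi
  have hi1J : i + 1 ∉ J := disjoint_left.mp hd3 (mem_image_of_mem _ hi)
  simp only [lpot, if_neg hiJ, if_neg hi1J]
  linarith [hupper i hi, hε (c i) (c (i + 1))]

lemma lpot_step_of_mem_lower (hε : ∀ a b, 0 ≤ ε a b) (hd2 : Disjoint I J)
    (hd3 : Disjoint (I.image (· + 1)) J) (hupper : ∀ i ∈ I, l i = l (i + 1) + ε (c i) (c (i + 1)))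
    {i : ℤ} (hi : i ∈ I)
    (hIJ : ∀ i ∈ I, i + 2 ∈ J →
      ε (c i) (c (i + 1)) + ε (c (i + 1)) (c (i + 2)) <
        (2 * l (i + 1) + ε (c i) (c (i + 1))) - l (i + 2))
    (hII : ∀ i ∈ I, i + 2 ∈ I →
      ε (c (i + 1)) (c (i + 2)) + ε (c (i + 2)) (c (i + 3)) ≤ l (i + 1) - l (i + 3))
    (hnext : i + 2 ∈ I ∨ i + 2 ∈ J) :
    (if i + 2 ∈ J then 1 else 0) + ε (c (i + 1)) (c (i + 2)) ≤
      lpot l J (i + 1) - lpot l J (i + 2) := by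
  have hi1J : i + 1 ∉ J := disjoint_left.mp hd3 (mem_image_of_mem _ hi)
  rcases hnext with hi2 | hi2
  · have hi2J : i + 2 ∉ J := disjoint_left.mp hd2 hi2
    have hl : l (i + 2) = l (i + 3) + ε (c (i + 2)) (c (i + 3)) := by
      simpa [add_assoc] using hupper (i + 2) hi2
    simp only [lpot, if_neg hi1J, if_neg hi2J]
    linarith [hII i hi hi2, hε (c (i + 1)) (c (i + 2))]
  · simp only [lpot, if_neg hi1J, if_pos hi2]
    linarith [hIJ i hi hi2]

lemma lpot_step_of_mem_primary (hd2 : Disjoint I J)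
    (hupper : ∀ i ∈ I, l i = l (i + 1) + ε (c i) (c (i + 1))) {u : ℤ} (hu : u ∈ J)
    (hJJ : ∀ k, k ∈ J → k + 1 ∈ J → ε (c k) (c (k + 1)) < l k - l (k + 1))
    (hJI : ∀ k, k ∈ J → k + 1 ∈ I →
      ε (c k) (c (k + 1)) + ε (c (k + 1)) (c (k + 2)) ≤
        l k - (2 * l (k + 2) + ε (c (k + 1)) (c (k + 2))))
    (hnext : u + 1 ∈ I ∨ u + 1 ∈ J) :
    (if u + 1 ∈ J then 1 else 0) + ε (c u) (c (u + 1)) ≤ lpot l J u - lpot l J (u + 1) := by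
  rcases hnext with hu1 | hu1
  · have hu1J : u + 1 ∉ J := disjoint_left.mp hd2 hu1
    have hl : l (u + 1) = l (u + 2) + ε (c (u + 1)) (c (u + 2)) := by
      simpa [add_assoc] using hupper (u + 1) hu1
    simp only [lpot, if_pos hu, if_neg hu1J]
    linarith [hJI u hu hu1]
  · simp only [lpot, if_pos hu, if_pos hu1]
    linarith [hJJ u hu hu1]

end

theorem statement12_general {C : Type*} (ε : C → C → ℤ)
    (hε : ∀ c c', ε c c' = 0 ∨ ε c c' = 1)
    (s : ℤ) (l : ℤ → ℤ) (c : ℤ → C) (I J : Finset ℤ)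
    (hd2 : Disjoint I J)
    (hd3 : Disjoint (I.image (· + 1)) J)
    (hu : I ∪ I.image (· + 1) ∪ J = Finset.Icc 1 s)
    (hupper : ∀ i ∈ I, l i = l (i + 1) + ε (c i) (c (i + 1)))
    (hJJ : ∀ k, k ∈ J → k + 1 ∈ J →
      ε (c k) (c (k + 1)) < l k - l (k + 1))
    (hJI : ∀ k, k ∈ J → k + 1 ∈ I →
      ε (c k) (c (k + 1)) + ε (c (k + 1)) (c (k + 2)) ≤
        l k - (2 * l (k + 2) + ε (c (k + 1)) (c (k + 2))))
    (hIJ : ∀ i ∈ I, i + 2 ∈ J →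
      ε (c i) (c (i + 1)) + ε (c (i + 1)) (c (i + 2)) <
        (2 * l (i + 1) + ε (c i) (c (i + 1))) - l (i + 2))
    (hII : ∀ i ∈ I, i + 2 ∈ I →
      ε (c (i + 1)) (c (i + 2)) + ε (c (i + 2)) (c (i + 3)) ≤ l (i + 1) - l (i + 3))
    :
    ∀ k k', 1 ≤ k → k ≤ k' → k' ≤ s →
      ((Finset.Ioc k k' ∩ J).card : ℤ) + Del ε c k k' ≤ lpot l J k - lpot l J k' := by
  have hε₀ : ∀ a b, 0 ≤ ε a b := fun a b => by rcases hε a b with h | h <;> omega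
  have hcover := fun v => mem_or_sub_one_mem_or_mem_of_union_eq (v := v) hu
  intro k k' hk hkk' hk's
  refine card_Ioc_inter_add_Del_le_of_step (fun u hku hus => ?_) hkk' hk's
  have hnext : u + 1 ∈ I ∨ u ∈ I ∨ u + 1 ∈ J := by
    simpa only [add_sub_cancel_right] using hcover (u + 1) (by omega) hus
  by_cases huI : u ∈ I
  · exact lpot_step_of_mem_upper hε₀ hd2 hd3 hupper huI
  rcases (hcover u (by omega) (by omega)).resolve_left huI with hlower | huJ
  · obtain ⟨i, hi, rfl⟩ : ∃ i ∈ I, u = i + 1 := ⟨u - 1, hlower, by ring⟩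
    rw [add_assoc i 1 1, one_add_one_eq_two] at hnext ⊢
    exact lpot_step_of_mem_lower hε₀ hd2 hd3 hupper hi hIJ hII
      (hnext.imp_right (·.resolve_left huI))
  · exact lpot_step_of_mem_primary hd2 hupper huJ hJJ hJI
      (hnext.imp_right (·.resolve_left (disjoint_left.mp hd2 · huJ)))

/-- Lemma 4.9, equation (4.9): for `ν ∈ E_ε` written as a sequence of primary particles,
`l'_k − l'_{k'} ≥ η(k,k') + Δ(k,k')` for all `k ≤ k'`, where `η(k,k') = |(k,k'] ∩ J|`. -/
theorem statement12 {C : Type*} (ε : C → C → ℤ)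
    (hε : ∀ c c', ε c c' = 0 ∨ ε c c' = 1)
    (s : ℤ) (l : ℤ → ℤ) (c : ℤ → C) (I J : Finset ℤ)
    (hd1 : Disjoint I (I.image (· + 1))) (hd2 : Disjoint I J)
    (hd3 : Disjoint (I.image (· + 1)) J)
    (hu : I ∪ I.image (· + 1) ∪ J = Finset.Icc 1 s)
    (hupper : ∀ i ∈ I, l i = l (i + 1) + ε (c i) (c (i + 1)))
    (hJJ : ∀ k, k ∈ J → k + 1 ∈ J →
      ε (c k) (c (k + 1)) < l k - l (k + 1))
    (hJI : ∀ k, k ∈ J → k + 1 ∈ I →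
      ε (c k) (c (k + 1)) + ε (c (k + 1)) (c (k + 2)) ≤
        l k - (2 * l (k + 2) + ε (c (k + 1)) (c (k + 2))))
    (hIJ : ∀ i ∈ I, i + 2 ∈ J →
      ε (c i) (c (i + 1)) + ε (c (i + 1)) (c (i + 2)) <
        (2 * l (i + 1) + ε (c i) (c (i + 1))) - l (i + 2))
    (hII : ∀ i ∈ I, i + 2 ∈ I →
      ε (c (i + 1)) (c (i + 2)) + ε (c (i + 2)) (c (i + 3)) ≤ l (i + 1) - l (i + 3))
    :
    ∀ k k', 1 ≤ k → k ≤ k' → k' ≤ s →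
      ((Finset.Ioc k k' ∩ J).card : ℤ) + Del ε c k k' ≤ lpot l J k - lpot l J k' :=
  statement12_general ε hε s l c I J hd2 hd3 hu hupper hJJ hJI hIJ hII
end

section
/- Let λ = ((l₁,c₁),…,(l_s,c_s)) be a sequence of primary particles consecutively related by ≻_ε, and let I, J be the unique subsets of {1,…,s} such that I, I+1, J form a set-partition of {1,…,s}, l_i − l_{i+1} = Δ(i,i+1) for all i ∈ I, and l_{j−1} − l_j > Δ(j−1,j) for all j ∈ J with j ≥ 2. Let σ be a permutation of {1,…,s} that is increasing on J, increasing on I, and satisfies σ(i+1) = σ(i)+1 for all i ∈ I, and suppose that the rearranged sequence — whose particle at position m is the primary particle (l_{σ^{-1}(m)} + Δ(m, σ^{-1}(m)), c_m) if σ^{-1}(m) ∈ J, and in which, for each i ∈ I, the particles at positions σ(i) and σ(i)+1 are merged into the secondary particle whose upper and lower halves they are — has all consecutive particles related by ≫_ε. Then for all (j,i) ∈ J × I: σ(j) < σ(i) if and only if φ(j,i) ≥ 0, where φ(j,i) = l_j − 2 l_{i+1} − Δ(j,i+1) − Δ(i+1−β(j,i), i+1). -/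
/-- The function `φ(j,i) = l_j − 2 l_{i+1} − Δ(j,i+1) − Δ(i+1−β(j,i), i+1)`. -/
noncomputable def Phi {C : Type*} (ε : C → C → ℤ) (c : ℤ → C) (l : ℤ → ℤ) (J : Finset ℤ)
    (j i : ℤ) : ℤ :=
  l j - 2 * l (i + 1) - Del ε c j (i + 1) - Del ε c (i + 1 - Bet J j i) (i + 1)

/-- The potential of the rearranged sequence at position `m`:
the particle originally at position `σ⁻¹(m)` gains the formal energy of transfer
`Δ(m, σ⁻¹(m))` (Lemma 4.4). -/
noncomputable def Lpp {C : Type*} (ε : C → C → ℤ) (c : ℤ → C) (l : ℤ → ℤ) (σ : Equiv.Perm ℤ)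
    (m : ℤ) : ℤ :=
  l (σ.symm m) + Del ε c m (σ.symm m)

open Finset

section Del

variable {C : Type*} (ε : C → C → ℤ) (c : ℤ → C)

theorem del_self (a : ℤ) : Del ε c a a = 0 := sub_self _

theorem del_comm (a b : ℤ) : Del ε c a b = -Del ε c b a := by
  unfold Del; ring

theorem del_of_le {a b : ℤ} (h : a ≤ b) : Del ε c a b = ∑ u ∈ Ico a b, ε (c u) (c (u + 1)) := by
  rw [Del, Ico_eq_empty_of_le h, sum_empty, sub_zero]

theorem del_add_del_of_le {a b d : ℤ} (hab : a ≤ b) (hbd : b ≤ d) :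
    Del ε c a b + Del ε c b d = Del ε c a d := by
  rw [del_of_le ε c hab, del_of_le ε c hbd, del_of_le ε c (hab.trans hbd),
    ← sum_union (Ico_disjoint_Ico_consecutive a b d), Ico_union_Ico_eq_Ico hab hbd]

theorem del_add_del (a b d : ℤ) : Del ε c a b + Del ε c b d = Del ε c a d := by
  have h : ∀ {x y z : ℤ}, x ≤ y → y ≤ z → Del ε c x y + Del ε c y z = Del ε c x z :=
    del_add_del_of_le ε c
  have h' := del_comm ε c
  rcases le_total a b with hab | hba <;> rcases le_total b d with hbd | hdb <;>
    rcases le_total a d with had | hda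
  · exact h hab hbd
  · exact h hab hbd
  · linarith [h had hdb, h' b d]
  · linarith [h hda hab, h' b d, h' a d]
  · linarith [h hba had, h' a b]
  · linarith [h hbd hda, h' a b, h' a d]
  · linarith [h hdb hba, h' a b, h' b d, h' a d]
  · linarith [h hdb hba, h' a b, h' b d, h' a d]

theorem del_add_one (a : ℤ) : Del ε c a (a + 1) = ε (c a) (c (a + 1)) := by
  rw [del_of_le ε c (by omega), show Ico a (a + 1) = {a} by ext; simp; omega, sum_singleton]

theorem del_add_two (a : ℤ) :
    Del ε c a (a + 2) = ε (c a) (c (a + 1)) + ε (c (a + 1)) (c (a + 2)) := by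
  rw [← del_add_del ε c a (a + 1), del_add_one, show a + 2 = a + 1 + 1 by ring, del_add_one]

theorem del_nonneg (hε : ∀ x y, 0 ≤ ε x y) {a b : ℤ} (h : a ≤ b) : 0 ≤ Del ε c a b := by
  rw [del_of_le ε c h]
  exact sum_nonneg fun _ _ => hε _ _

theorem del_le_sub_of_step (f : ℤ → ℤ) {a b : ℤ} (hab : a ≤ b)
    (h : ∀ k, a ≤ k → k < b → ε (c k) (c (k + 1)) ≤ f k - f (k + 1)) :
    Del ε c a b ≤ f a - f b := by
  induction b, hab using Int.leInduction with
  | base => simp [del_self]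
  | succ b hab ih =>
    rw [← del_add_del ε c a b (b + 1), del_add_one]
    linarith [ih fun k h₁ h₂ => h k h₁ (by omega), h b hab (by omega)]

theorem del_le_sub (hε : ∀ x y, ε x y ≤ 1) {a b : ℤ} (h : a ≤ b) : Del ε c a b ≤ b - a := by
  have := del_le_sub_of_step ε c (fun k => -k) h fun k _ _ => by linarith [hε (c k) (c (k + 1))]
  linarith

end Del

section Bet

theorem bet_eq_card_sub (J : Finset ℤ) (a b : ℤ) :
    Bet J a b = #(J.filter (· < b)) - #(J.filter (· < a)) := by
  suffices h : ∀ a b, a ≤ b → #(Ico a b ∩ J) + #(J.filter (· < a)) = #(J.filter (· < b)) by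
    rcases le_total a b with hab | hba
    · rw [Bet, Ico_eq_empty_of_le hab, empty_inter, card_empty, ← h a b hab]; push_cast; ring
    · rw [Bet, Ico_eq_empty_of_le hba, empty_inter, card_empty, ← h b a hba]; push_cast; ring
  intro a b hab
  rw [← card_union_of_disjoint]
  · congr 1; ext x; simp only [mem_union, mem_inter, mem_Ico, mem_filter]; grind
  · rw [disjoint_left]; intro x; simp only [mem_inter, mem_Ico, mem_filter]; omega

theorem card_filter_lt_add_one (J : Finset ℤ) (x : ℤ) :
    #(J.filter (· < x + 1)) = #(J.filter (· < x)) + if x ∈ J then 1 else 0 := by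
  split_ifs with hx
  · rw [← card_insert_of_notMem (s := J.filter (· < x)) (a := x) (by simp)]
    congr 1; ext y; simp only [mem_filter, mem_insert]; grind
  · congr 1; ext y; simp only [mem_filter]; grind

theorem card_filter_lt_mono (J : Finset ℤ) {a b : ℤ} (h : a ≤ b) :
    #(J.filter (· < a)) ≤ #(J.filter (· < b)) :=
  card_le_card fun x hx => by grind

end Bet

section Chain

variable {C : Type*} {ε : C → C → ℤ} {c : ℤ → C} {l : ℤ → ℤ} {s : ℤ} {J : Finset ℤ}

theorem del_le_of_chain (hchain : ∀ k, 1 ≤ k → k < s → ε (c k) (c (k + 1)) ≤ l k - l (k + 1))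
    (hJ : ∀ j ∈ J, 2 ≤ j → Del ε c (j - 1) j < l (j - 1) - l j)
    {a b : ℤ} (ha : 1 ≤ a) (hab : a ≤ b) (hb : b ≤ s) :
    Del ε c a b ≤ (l a + #(J.filter (· < a + 1))) - (l b + #(J.filter (· < b + 1))) := by
  refine del_le_sub_of_step ε c (fun k => l k + #(J.filter (· < k + 1))) hab fun k hak hkb => ?_
  have hcount := card_filter_lt_add_one J (k + 1)
  split_ifs at hcount with hk
  · have hstep := hJ (k + 1) hk (by omega)
    rw [add_sub_cancel_right, del_add_one] at hstep
    push_cast [hcount]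
    omega
  · have hstep := hchain k (by omega) (by omega)
    push_cast [hcount]
    omega

theorem phi_antitone (hε : ∀ x y, ε x y ≤ 1)
    (hchain : ∀ k, 1 ≤ k → k < s → ε (c k) (c (k + 1)) ≤ l k - l (k + 1))
    (hJ : ∀ j ∈ J, 2 ≤ j → Del ε c (j - 1) j < l (j - 1) - l j) (hJs : J ⊆ Icc 1 s)
    {j j' : ℤ} (hj : j ∈ J) (hj' : j' ∈ J) (hjj' : j ≤ j') (i : ℤ) :
    Phi ε c l J j' i ≤ Phi ε c l J j i := by
  have hdel := del_le_of_chain hchain hJ (mem_Icc.1 (hJs hj)).1 hjj' (mem_Icc.1 (hJs hj')).2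
  have hNj := card_filter_lt_add_one J j
  have hNj' := card_filter_lt_add_one J j'
  rw [if_pos hj] at hNj
  rw [if_pos hj'] at hNj'
  have hβj := bet_eq_card_sub J j i
  have hβj' := bet_eq_card_sub J j' i
  have hshift := del_le_sub ε c hε
    (a := i + 1 - Bet J j i) (b := i + 1 - Bet J j' i) (by linarith [card_filter_lt_mono J hjj'])
  unfold Phi
  push_cast [hNj, hNj'] at hdel
  linarith [del_add_del ε c j j' (i + 1),
    del_add_del ε c (i + 1 - Bet J j i) (i + 1 - Bet J j' i) (i + 1)]

end Chain

/-- `I` marks the pairs `i, i + 1` merged into secondary particles and `J` the remaining primary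
particles; the positions they occupy after rearranging have the same shape. -/
structure IsPartition (s : ℤ) (I J : Finset ℤ) : Prop where
  disjoint_image_add_one : Disjoint I (I.image (· + 1))
  disjoint : Disjoint I J
  disjoint_image_add_one_right : Disjoint (I.image (· + 1)) J
  union_eq : I ∪ I.image (· + 1) ∪ J = Icc 1 s

namespace IsPartition

variable {s : ℤ} {I J : Finset ℤ}

theorem subset_left (h : IsPartition s I J) : I ⊆ Icc 1 s := by
  rw [← h.union_eq]; exact subset_union_left.trans subset_union_left

theorem subset_right (h : IsPartition s I J) : J ⊆ Icc 1 s := by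
  rw [← h.union_eq]; exact subset_union_right

theorem add_one_le (h : IsPartition s I J) {i : ℤ} (hi : i ∈ I) : i + 1 ≤ s := by
  have := (subset_union_right.trans subset_union_left).trans h.union_eq.le (mem_image_of_mem _ hi)
  exact (mem_Icc.1 this).2

theorem notMem_right_of_mem_left (h : IsPartition s I J) {i : ℤ} (hi : i ∈ I) : i ∉ J :=
  disjoint_left.1 h.disjoint hi

theorem add_one_notMem_left (h : IsPartition s I J) {i : ℤ} (hi : i ∈ I) : i + 1 ∉ I :=
  disjoint_right.1 h.disjoint_image_add_one (mem_image_of_mem _ hi)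

theorem add_one_notMem_right (h : IsPartition s I J) {i : ℤ} (hi : i ∈ I) : i + 1 ∉ J :=
  disjoint_left.1 h.disjoint_image_add_one_right (mem_image_of_mem _ hi)

theorem mem_or_sub_one_mem (h : IsPartition s I J) {p : ℤ} (hp : p ∈ Icc 1 s) :
    p ∈ J ∨ p ∈ I ∨ p - 1 ∈ I := by
  rw [← h.union_eq, mem_union, mem_union, mem_image] at hp
  rcases hp with (hp | ⟨i, hi, rfl⟩) | hp
  · exact .inr (.inl hp)
  · exact .inr (.inr (by simpa using hi))
  · exact .inl hp

end IsPartition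

section Runs

/-! Here `S` holds the positions of the upper halves of secondary particles, `P` those of
primary particles, and `L` the potentials of the rearranged sequence. -/

variable {C : Type*} {ε : C → C → ℤ} {c : ℤ → C} {L : ℤ → ℤ} {s : ℤ} {S P : Finset ℤ}

theorem del_le_of_run (hp : IsPartition s S P)
    (hSS : ∀ m, m ∈ S → m + 2 ∈ S →
      ε (c (m + 1)) (c (m + 2)) + ε (c (m + 2)) (c (m + 3)) ≤ L (m + 1) - L (m + 3))
    {m n : ℤ} (hm : m ∈ S) (hn : n ∈ S) (hmn : m ≤ n) (hgap : ∀ p ∈ P, p ≤ m ∨ n ≤ p) :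
    Del ε c (m + 1) (n + 1) ≤ L (m + 1) - L (n + 1) := by
  obtain rfl | hlt := hmn.eq_or_lt
  · simp [del_self]
  have hm₁ := hp.add_one_notMem_left hm
  have hmn₁ : m + 1 ≠ n := fun h => hm₁ (h ▸ hn)
  have hm₂ : m + 2 ∈ S := by
    have hns := mem_Icc.1 (hp.subset_left hn)
    have hms := mem_Icc.1 (hp.subset_left hm)
    rcases hp.mem_or_sub_one_mem (p := m + 2) (mem_Icc.2 ⟨by omega, by omega⟩) with h | h | h
    · obtain rfl : n = m + 2 := by rcases hgap _ h with h' | h' <;> omega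
      exact hn
    · exact h
    · exact absurd (by simpa [show m + 2 - 1 = m + 1 by ring] using h) hm₁
  have hrest := del_le_of_run hp hSS hm₂ hn (by omega) fun p hp => (hgap p hp).imp (by omega) id
  have htwo := del_add_two ε c (m + 1)
  rw [show m + 1 + 1 = m + 2 by ring, show m + 1 + 2 = m + 3 by ring] at htwo
  rw [show m + 2 + 1 = m + 3 by ring] at hrest
  linarith [hSS m hm hm₂, del_add_del ε c (m + 1) (m + 3) (n + 1)]
termination_by (n - m).toNat

theorem del_add_del_le_of_run (hp : IsPartition s S P)
    (hPS : ∀ m, m ∈ P → m + 1 ∈ S →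
      ε (c m) (c (m + 1)) + ε (c (m + 1)) (c (m + 2)) ≤
        L m - (2 * L (m + 2) + ε (c (m + 1)) (c (m + 2))))
    (hSS : ∀ m, m ∈ S → m + 2 ∈ S →
      ε (c (m + 1)) (c (m + 2)) + ε (c (m + 2)) (c (m + 3)) ≤ L (m + 1) - L (m + 3))
    {a b : ℤ} (ha : a ∈ P) (hb : b ∈ S) (hab : a < b) (hgap : ∀ p ∈ P, p ≤ a ∨ b ≤ p) :
    Del ε c a (b + 1) + Del ε c (a + 1) (b + 1) ≤ L a - 2 * L (b + 1) := by
  have ha₁ : a + 1 ∈ S := by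
    have has := mem_Icc.1 (hp.subset_right ha)
    have hbs := mem_Icc.1 (hp.subset_left hb)
    rcases hp.mem_or_sub_one_mem (p := a + 1) (mem_Icc.2 ⟨by omega, by omega⟩) with h | h | h
    · obtain rfl : b = a + 1 := by rcases hgap _ h with h' | h' <;> omega
      exact hb
    · exact h
    · exact absurd (by simpa using h) (hp.notMem_right_of_mem_left · ha)
  have hrun := del_le_of_run hp hSS ha₁ hb (by omega) fun p hp => (hgap p hp).imp (by omega) id
  rw [show a + 1 + 1 = a + 2 by ring] at hrun
  have hone : Del ε c (a + 1) (a + 2) = ε (c (a + 1)) (c (a + 2)) := by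
    rw [show a + 2 = a + 1 + 1 by ring, del_add_one]
  linarith [hPS a ha ha₁, del_add_two ε c a, del_add_del ε c a (a + 2) (b + 1),
    del_add_del ε c (a + 1) (a + 2) (b + 1)]

theorem add_del_add_del_neg_of_run (hp : IsPartition s S P)
    (hSP : ∀ m, m ∈ S → m + 2 ∈ P →
      ε (c m) (c (m + 1)) + ε (c (m + 1)) (c (m + 2)) <
        (2 * L (m + 1) + ε (c m) (c (m + 1))) - L (m + 2))
    (hSS : ∀ m, m ∈ S → m + 2 ∈ S →
      ε (c (m + 1)) (c (m + 2)) + ε (c (m + 2)) (c (m + 3)) ≤ L (m + 1) - L (m + 3))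
    {a b : ℤ} (ha : a ∈ S) (hb : b ∈ P) (hab : a < b) (hgap : ∀ p ∈ P, p ≤ a ∨ b ≤ p) :
    L b - 2 * L (a + 1) + Del ε c (a + 1) b + Del ε c (a + 1) (b - 1) < 0 := by
  obtain ⟨n, rfl⟩ : ∃ n, b = n + 2 := ⟨b - 2, by ring⟩
  have hn₁ : n + 1 ∉ S := fun h => hp.add_one_notMem_right h (by rwa [add_assoc])
  have han : a ≤ n := by
    by_contra! h
    exact hn₁ (by rwa [show n + 1 = a by omega])
  have hn : n ∈ S := by
    have has := mem_Icc.1 (hp.subset_left ha)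
    have hbs := mem_Icc.1 (hp.subset_right hb)
    rcases hp.mem_or_sub_one_mem (p := n + 1) (mem_Icc.2 ⟨by omega, by omega⟩) with h | h | h
    · rcases hgap _ h with h' | h' <;> omega
    · exact absurd h hn₁
    · simpa using h
  have hrun := del_le_of_run hp hSS ha hn han fun p hp => (hgap p hp).imp id (by omega)
  have hone : Del ε c (n + 1) (n + 2) = ε (c (n + 1)) (c (n + 2)) := by
    rw [show n + 2 = n + 1 + 1 by ring, del_add_one]
  rw [show n + 2 - 1 = n + 1 by ring]
  linarith [hSP n hn hb, del_add_del ε c (a + 1) (n + 1) (n + 2)]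

end Runs

theorem card_filter_Icc_lt {a b t : ℤ} (hat : a ≤ t) (htb : t ≤ b + 1) :
    (#((Icc a b).filter (· < t)) : ℤ) = t - a := by
  rw [show (Icc a b).filter (· < t) = Ico a t by ext; simp; omega, Int.card_Ico]
  omega

theorem exists_max_mem_lt {P : Finset ℤ} {a b : ℤ} (ha : a ∈ P) (hab : a < b) :
    ∃ a' ∈ P, a ≤ a' ∧ a' < b ∧ ∀ p ∈ P, p ≤ a' ∨ b ≤ p := by
  have ha' : a ∈ P.filter (· < b) := mem_filter.2 ⟨ha, hab⟩
  obtain ⟨a', ha'', hmax⟩ := (P.filter (· < b)).exists_max_image id ⟨a, ha'⟩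
  rw [mem_filter] at ha''
  refine ⟨a', ha''.1, hmax a ha', ha''.2, fun p hp => ?_⟩
  by_contra! h
  exact (hmax p (mem_filter.2 ⟨hp, h.2⟩)).not_gt h.1

theorem exists_min_mem_gt {P : Finset ℤ} {a b : ℤ} (hb : b ∈ P) (hab : a < b) :
    ∃ b' ∈ P, a < b' ∧ b' ≤ b ∧ ∀ p ∈ P, p ≤ a ∨ b' ≤ p := by
  have hb' : b ∈ P.filter (a < ·) := mem_filter.2 ⟨hb, hab⟩
  obtain ⟨b', hb'', hmin⟩ := (P.filter (a < ·)).exists_min_image id ⟨b, hb'⟩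
  rw [mem_filter] at hb''
  refine ⟨b', hb''.1, hb''.2, hmin b hb', fun p hp => ?_⟩
  by_contra! h
  exact (hmin p (mem_filter.2 ⟨hp, h.1⟩)).not_gt h.2

/-- The primary particle `j ∈ J` goes to position `σ j`, the secondary particle `i ∈ I` to
positions `σ i, σ i + 1`. -/
structure IsRearrangement (s : ℤ) (I J : Finset ℤ) (σ : Equiv.Perm ℤ) : Prop where
  mapsTo : ∀ k ∈ Icc 1 s, σ k ∈ Icc 1 s
  strictMonoOn_right : StrictMonoOn σ J
  strictMonoOn_left : StrictMonoOn σ I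
  map_add_one : ∀ i ∈ I, σ (i + 1) = σ i + 1

namespace IsRearrangement

variable {s : ℤ} {I J : Finset ℤ} {σ : Equiv.Perm ℤ}

theorem image_Icc (hσ : IsRearrangement s I J σ) : (Icc 1 s).image σ = Icc 1 s :=
  eq_of_subset_of_card_le
    (fun _ hp => by obtain ⟨k, hk, rfl⟩ := mem_image.1 hp; exact hσ.mapsTo k hk)
    (card_image_of_injective _ σ.injective).ge

theorem image_image_add_one (hσ : IsRearrangement s I J σ) :
    (I.image (· + 1)).image σ = (I.image σ).image (· + 1) := by
  rw [image_image, image_image]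
  exact image_congr fun i hi => hσ.map_add_one i hi

theorem isPartition_image (hσ : IsRearrangement s I J σ) (hp : IsPartition s I J) :
    IsPartition s (I.image σ) (J.image σ) where
  disjoint_image_add_one := by
    rw [← hσ.image_image_add_one]
    exact (disjoint_image σ.injective).2 hp.disjoint_image_add_one
  disjoint := (disjoint_image σ.injective).2 hp.disjoint
  disjoint_image_add_one_right := by
    rw [← hσ.image_image_add_one]
    exact (disjoint_image σ.injective).2 hp.disjoint_image_add_one_right
  union_eq := by
    rw [← hσ.image_image_add_one, ← image_union, ← image_union, hp.union_eq, hσ.image_Icc]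

theorem strictMonoOn_union (hσ : IsRearrangement s I J σ) (hp : IsPartition s I J) :
    StrictMonoOn σ ↑(I ∪ I.image (· + 1)) := by
  have hform : ∀ a ∈ I ∪ I.image (· + 1),
      ∃ a₀ ∈ I, ∃ d : ℤ, (d = 0 ∨ d = 1) ∧ a = a₀ + d ∧ σ a = σ a₀ + d := by
    intro a ha
    rcases mem_union.1 ha with ha | ha
    · exact ⟨a, ha, 0, .inl rfl, by simp, by simp⟩
    · obtain ⟨a₀, ha₀, rfl⟩ := mem_image.1 ha
      exact ⟨a₀, ha₀, 1, .inr rfl, rfl, hσ.map_add_one a₀ ha₀⟩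
  intro a ha b hb hab
  obtain ⟨a₀, ha₀, da, hda, rfl, hσa⟩ := hform a ha
  obtain ⟨b₀, hb₀, db, hdb, rfl, hσb⟩ := hform b hb
  rw [hσa, hσb]
  rcases lt_trichotomy a₀ b₀ with h | rfl | h
  · have hne : σ (a₀ + 1) ≠ σ b₀ :=
      σ.injective.ne fun h' => hp.add_one_notMem_left ha₀ (h' ▸ hb₀)
    rw [hσ.map_add_one a₀ ha₀] at hne
    have := hσ.strictMonoOn_left ha₀ hb₀ h
    omega
  · omega
  · omega

theorem card_filter_lt (hσ : IsRearrangement s I J σ) (t : ℤ) :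
    #((Icc 1 s).filter (σ · < t)) = #((Icc 1 s).filter (· < t)) := by
  conv_rhs => rw [← hσ.image_Icc, filter_image]
  exact (card_image_of_injective _ σ.injective).symm

/-- Counting the particles placed before `σ x`: primary ones are not reordered, so only the
secondary halves can move across. -/
theorem sub_add_bet_eq (hσ : IsRearrangement s I J σ) (hp : IsPartition s I J) {x y : ℤ}
    (hx : x ∈ J) (hy : 1 ≤ y) (hys : y ≤ s + 1) :
    σ x - y + Bet J x y = (#((I ∪ I.image (· + 1)).filter (σ · < σ x)) : ℤ) -
      #((I ∪ I.image (· + 1)).filter (· < y)) := by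
  have hsplit : ∀ (q : ℤ → Prop) [DecidablePred q],
      #((Icc 1 s).filter q) = #((I ∪ I.image (· + 1)).filter q) + #(J.filter q) := by
    intro q _
    rw [← hp.union_eq, filter_union, card_union_of_disjoint (disjoint_filter_filter
      (disjoint_union_left.2 ⟨hp.disjoint, hp.disjoint_image_add_one_right⟩))]
  have hJ : J.filter (σ · < σ x) = J.filter (· < x) :=
    filter_congr fun k hk => hσ.strictMonoOn_right.lt_iff_lt hk hx
  have hσx := mem_Icc.1 (hσ.mapsTo x (hp.subset_right hx))
  have hbefore := hsplit (σ · < σ x)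
  rw [hσ.card_filter_lt, hJ] at hbefore
  have hbelow := hsplit (· < y)
  have := card_filter_Icc_lt (b := s) hσx.1 (by omega)
  have := card_filter_Icc_lt (b := s) hy hys
  rw [bet_eq_card_sub]
  omega

theorem le_sub_bet_of_lt (hσ : IsRearrangement s I J σ) (hp : IsPartition s I J) {x i : ℤ}
    (hx : x ∈ J) (hi : i ∈ I) (h : σ x < σ i) : σ x ≤ i - Bet J x i := by
  have hsub : (I ∪ I.image (· + 1)).filter (σ · < σ x) ⊆ (I ∪ I.image (· + 1)).filter (· < i) := by
    intro k hk
    rw [mem_filter] at hk ⊢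
    exact ⟨hk.1, ((hσ.strictMonoOn_union hp).lt_iff_lt hk.1 (mem_union_left _ hi)).1
      (hk.2.trans h)⟩
  have := card_le_card hsub
  have := hσ.sub_add_bet_eq hp hx (mem_Icc.1 (hp.subset_left hi)).1 (by linarith [hp.add_one_le hi])
  omega

theorem add_two_sub_bet_le_of_lt (hσ : IsRearrangement s I J σ) (hp : IsPartition s I J)
    {x i : ℤ} (hx : x ∈ J) (hi : i ∈ I) (h : σ i < σ x) : i + 2 - Bet J x i ≤ σ x := by
  have hne : σ (i + 1) ≠ σ x := σ.injective.ne fun h' => hp.add_one_notMem_right hi (h' ▸ hx)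
  rw [hσ.map_add_one i hi] at hne
  have hi₁ : i + 1 ∈ I ∪ I.image (· + 1) := mem_union_right _ (mem_image_of_mem _ hi)
  have hsub : (I ∪ I.image (· + 1)).filter (· < i + 2) ⊆
      (I ∪ I.image (· + 1)).filter (σ · < σ x) := by
    intro k hk
    rw [mem_filter] at hk ⊢
    have := ((hσ.strictMonoOn_union hp).le_iff_le hk.1 hi₁).2 (by omega)
    rw [hσ.map_add_one i hi] at this
    exact ⟨hk.1, by omega⟩
  have hbet : Bet J x (i + 2) = Bet J x i := by
    rw [bet_eq_card_sub, bet_eq_card_sub, show i + 2 = i + 1 + 1 by ring,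
      card_filter_lt_add_one, card_filter_lt_add_one, if_neg (hp.add_one_notMem_right hi),
      if_neg (hp.notMem_right_of_mem_left hi)]
    simp
  have := card_le_card hsub
  have := hσ.sub_add_bet_eq hp hx (y := i + 2) (by linarith [(mem_Icc.1 (hp.subset_left hi)).1])
    (by linarith [hp.add_one_le hi])
  omega

end IsRearrangement

section Phi

variable {C : Type*} {ε : C → C → ℤ} {c : ℤ → C} {l : ℤ → ℤ} {s : ℤ} {I J : Finset ℤ}
  {σ : Equiv.Perm ℤ}

theorem phi_eq_lpp {i : ℤ} (h : σ (i + 1) = σ i + 1) (j : ℤ) :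
    Phi ε c l J j i = Lpp ε c l σ (σ j) - 2 * Lpp ε c l σ (σ i + 1) -
      Del ε c (σ j) (σ i + 1) + Del ε c (σ i + 1) (i + 1 - Bet J j i) := by
  have hi : σ.symm (σ i + 1) = i + 1 := by rw [← h, Equiv.symm_apply_apply]
  simp only [Phi, Lpp, Equiv.symm_apply_apply, hi]
  linarith [del_add_del ε c (σ j) j (i + 1), del_add_del ε c (σ j) (σ i + 1) (i + 1),
    del_add_del ε c (σ i + 1) (i + 1 - Bet J j i) (i + 1)]

/-- Compare with the last primary particle placed before the secondary particle `i`. -/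
theorem phi_nonneg_of_lt (hε₀ : ∀ x y, 0 ≤ ε x y) (hε₁ : ∀ x y, ε x y ≤ 1)
    (hchain : ∀ k, 1 ≤ k → k < s → ε (c k) (c (k + 1)) ≤ l k - l (k + 1))
    (hJ : ∀ j ∈ J, 2 ≤ j → Del ε c (j - 1) j < l (j - 1) - l j)
    (hp : IsPartition s I J) (hσ : IsRearrangement s I J σ)
    (hJI : ∀ m, m ∈ J.image σ → m + 1 ∈ I.image σ →
      ε (c m) (c (m + 1)) + ε (c (m + 1)) (c (m + 2)) ≤
        Lpp ε c l σ m - (2 * Lpp ε c l σ (m + 2) + ε (c (m + 1)) (c (m + 2))))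
    (hII : ∀ m, m ∈ I.image σ → m + 2 ∈ I.image σ →
      ε (c (m + 1)) (c (m + 2)) + ε (c (m + 2)) (c (m + 3)) ≤
        Lpp ε c l σ (m + 1) - Lpp ε c l σ (m + 3))
    {j i : ℤ} (hj : j ∈ J) (hi : i ∈ I) (hlt : σ j < σ i) : 0 ≤ Phi ε c l J j i := by
  obtain ⟨_, hjs', hjjs, hjsi, hgap⟩ := exists_max_mem_lt (mem_image_of_mem σ hj) hlt
  obtain ⟨js, hjs, rfl⟩ := mem_image.1 hjs'
  have hrun := del_add_del_le_of_run (hσ.isPartition_image hp) hJI hII hjs'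
    (mem_image_of_mem σ hi) hjsi hgap
  have hcount := hσ.le_sub_bet_of_lt hp hjs hi hjsi
  calc 0 ≤ Del ε c (σ js + 1) (i + 1 - Bet J js i) := del_nonneg ε c hε₀ (by omega)
    _ ≤ Phi ε c l J js i := by
      rw [phi_eq_lpp (hσ.map_add_one i hi)]
      linarith [del_add_del ε c (σ js + 1) (σ i + 1) (i + 1 - Bet J js i)]
    _ ≤ Phi ε c l J j i := phi_antitone hε₁ hchain hJ hp.subset_right hj hjs
      ((hσ.strictMonoOn_right.le_iff_le hj hjs).1 hjjs) i

/-- Compare with the first primary particle placed after the secondary particle `i`. -/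
theorem phi_neg_of_gt (hε₀ : ∀ x y, 0 ≤ ε x y) (hε₁ : ∀ x y, ε x y ≤ 1)
    (hchain : ∀ k, 1 ≤ k → k < s → ε (c k) (c (k + 1)) ≤ l k - l (k + 1))
    (hJ : ∀ j ∈ J, 2 ≤ j → Del ε c (j - 1) j < l (j - 1) - l j)
    (hp : IsPartition s I J) (hσ : IsRearrangement s I J σ)
    (hIJ : ∀ m, m ∈ I.image σ → m + 2 ∈ J.image σ →
      ε (c m) (c (m + 1)) + ε (c (m + 1)) (c (m + 2)) <
        (2 * Lpp ε c l σ (m + 1) + ε (c m) (c (m + 1))) - Lpp ε c l σ (m + 2))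
    (hII : ∀ m, m ∈ I.image σ → m + 2 ∈ I.image σ →
      ε (c (m + 1)) (c (m + 2)) + ε (c (m + 2)) (c (m + 3)) ≤
        Lpp ε c l σ (m + 1) - Lpp ε c l σ (m + 3))
    {j i : ℤ} (hj : j ∈ J) (hi : i ∈ I) (hlt : σ i < σ j) : Phi ε c l J j i < 0 := by
  obtain ⟨_, hjh', hijh, hjhj, hgap⟩ := exists_min_mem_gt (mem_image_of_mem σ hj) hlt
  obtain ⟨jh, hjh, rfl⟩ := mem_image.1 hjh'
  have hrun := add_del_add_del_neg_of_run (hσ.isPartition_image hp) hIJ hII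
    (mem_image_of_mem σ hi) hjh' hijh hgap
  have hcount := hσ.add_two_sub_bet_le_of_lt hp hjh hi hijh
  calc Phi ε c l J j i ≤ Phi ε c l J jh i := phi_antitone hε₁ hchain hJ hp.subset_right hjh hj
        ((hσ.strictMonoOn_right.le_iff_le hjh hj).1 hjhj) i
    _ < Del ε c (σ jh - 1) (i + 1 - Bet J jh i) := by
      rw [phi_eq_lpp (hσ.map_add_one i hi)]
      linarith [del_comm ε c (σ jh) (σ i + 1), del_comm ε c (σ jh - 1) (σ i + 1),
        del_add_del ε c (σ jh - 1) (σ i + 1) (i + 1 - Bet J jh i)]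
    _ ≤ 0 := by
      rw [del_comm, neg_nonpos]
      exact del_nonneg ε c hε₀ (by omega)

end Phi

theorem statement15_general {C : Type*} (ε : C → C → ℤ)
    (hε : ∀ c c', ε c c' = 0 ∨ ε c c' = 1)
    (s : ℤ) (l : ℤ → ℤ) (c : ℤ → C) (I J : Finset ℤ)
    (hchain : ∀ k, 1 ≤ k → k < s → ε (c k) (c (k + 1)) ≤ l k - l (k + 1))
    (hd1 : Disjoint I (I.image (· + 1))) (hd2 : Disjoint I J)
    (hd3 : Disjoint (I.image (· + 1)) J)
    (hu : I ∪ I.image (· + 1) ∪ J = Finset.Icc 1 s)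
    (hJ : ∀ j ∈ J, 2 ≤ j → Del ε c (j - 1) j < l (j - 1) - l j)
    (σ : Equiv.Perm ℤ)
    (hσmaps : ∀ k ∈ Finset.Icc 1 s, σ k ∈ Finset.Icc 1 s)
    (hσJ : ∀ j ∈ J, ∀ j' ∈ J, j < j' → σ j < σ j')
    (hσI : ∀ i ∈ I, ∀ i' ∈ I, i < i' → σ i < σ i')
    (hσI1 : ∀ i ∈ I, σ (i + 1) = σ i + 1)
    -- the rearranged sequence is well related by `≫_ε`:
    (hJI'' : ∀ m, m ∈ J.image (fun x => σ x) → m + 1 ∈ I.image (fun x => σ x) →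
      ε (c m) (c (m + 1)) + ε (c (m + 1)) (c (m + 2)) ≤
        Lpp ε c l σ m - (2 * Lpp ε c l σ (m + 2) + ε (c (m + 1)) (c (m + 2))))
    (hIJ'' : ∀ m, m ∈ I.image (fun x => σ x) → m + 2 ∈ J.image (fun x => σ x) →
      ε (c m) (c (m + 1)) + ε (c (m + 1)) (c (m + 2)) <
        (2 * Lpp ε c l σ (m + 1) + ε (c m) (c (m + 1))) - Lpp ε c l σ (m + 2))
    (hII'' : ∀ m, m ∈ I.image (fun x => σ x) → m + 2 ∈ I.image (fun x => σ x) →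
      ε (c (m + 1)) (c (m + 2)) + ε (c (m + 2)) (c (m + 3)) ≤
        Lpp ε c l σ (m + 1) - Lpp ε c l σ (m + 3)) :
    ∀ j ∈ J, ∀ i ∈ I, (σ j < σ i ↔ 0 ≤ Phi ε c l J j i) := by
  intro j hj i hi
  have hε₀ : ∀ x y, 0 ≤ ε x y := fun x y => by rcases hε x y with h | h <;> omega
  have hε₁ : ∀ x y, ε x y ≤ 1 := fun x y => by rcases hε x y with h | h <;> omega
  have hp : IsPartition s I J := ⟨hd1, hd2, hd3, hu⟩
  have hσ : IsRearrangement s I J σ :=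
    ⟨hσmaps, fun a ha b hb => hσJ a ha b hb, fun a ha b hb => hσI a ha b hb, hσI1⟩
  rcases lt_trichotomy (σ j) (σ i) with hlt | heq | hgt
  · exact iff_of_true hlt (phi_nonneg_of_lt hε₀ hε₁ hchain hJ hp hσ hJI'' hII'' hj hi hlt)
  · exact absurd (σ.injective heq ▸ hj) (hp.notMem_right_of_mem_left hi)
  · exact iff_of_false (lt_asymm hgt)
      (not_le.2 (phi_neg_of_gt hε₀ hε₁ hchain hJ hp hσ hIJ'' hII'' hj hi hgt))

/-- Proposition 4.6 (final positions for `Φ`): if the rearranged sequence given by `σ`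
(primary particles at positions `σ(J)`, secondary particles occupying positions
`σ(i), σ(i)+1` for `i ∈ I`) has all consecutive particles related by `≫_ε`, then for all
`(j,i) ∈ J × I`, `σ(j) < σ(i) ⟺ φ(j,i) ≥ 0`. -/
theorem statement15 {C : Type*} (ε : C → C → ℤ)
    (hε : ∀ c c', ε c c' = 0 ∨ ε c c' = 1)
    (s : ℤ) (l : ℤ → ℤ) (c : ℤ → C) (I J : Finset ℤ)
    (hchain : ∀ k, 1 ≤ k → k < s → ε (c k) (c (k + 1)) ≤ l k - l (k + 1))
    (hd1 : Disjoint I (I.image (· + 1))) (hd2 : Disjoint I J)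
    (hd3 : Disjoint (I.image (· + 1)) J)
    (hu : I ∪ I.image (· + 1) ∪ J = Finset.Icc 1 s)
    (hI : ∀ i ∈ I, l i - l (i + 1) = Del ε c i (i + 1))
    (hJ : ∀ j ∈ J, 2 ≤ j → Del ε c (j - 1) j < l (j - 1) - l j)
    (σ : Equiv.Perm ℤ)
    (hσmaps : ∀ k ∈ Finset.Icc 1 s, σ k ∈ Finset.Icc 1 s)
    (hσJ : ∀ j ∈ J, ∀ j' ∈ J, j < j' → σ j < σ j')
    (hσI : ∀ i ∈ I, ∀ i' ∈ I, i < i' → σ i < σ i')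
    (hσI1 : ∀ i ∈ I, σ (i + 1) = σ i + 1)
    -- the rearranged sequence is well related by `≫_ε`:
    (hJJ'' : ∀ m, m ∈ J.image (fun x => σ x) → m + 1 ∈ J.image (fun x => σ x) →
      ε (c m) (c (m + 1)) < Lpp ε c l σ m - Lpp ε c l σ (m + 1))
    (hJI'' : ∀ m, m ∈ J.image (fun x => σ x) → m + 1 ∈ I.image (fun x => σ x) →
      ε (c m) (c (m + 1)) + ε (c (m + 1)) (c (m + 2)) ≤
        Lpp ε c l σ m - (2 * Lpp ε c l σ (m + 2) + ε (c (m + 1)) (c (m + 2))))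
    (hIJ'' : ∀ m, m ∈ I.image (fun x => σ x) → m + 2 ∈ J.image (fun x => σ x) →
      ε (c m) (c (m + 1)) + ε (c (m + 1)) (c (m + 2)) <
        (2 * Lpp ε c l σ (m + 1) + ε (c m) (c (m + 1))) - Lpp ε c l σ (m + 2))
    (hII'' : ∀ m, m ∈ I.image (fun x => σ x) → m + 2 ∈ I.image (fun x => σ x) →
      ε (c (m + 1)) (c (m + 2)) + ε (c (m + 2)) (c (m + 3)) ≤
        Lpp ε c l σ (m + 1) - Lpp ε c l σ (m + 3)) :
    ∀ j ∈ J, ∀ i ∈ I, (σ j < σ i ↔ 0 ≤ Phi ε c l J j i) :=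
  statement15_general ε hε s l c I J hchain hd1 hd2 hd3 hu hJ σ hσmaps hσJ hσI hσI1 hJI'' hIJ''
    hII''
end
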